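/- arXiv:2206.09270 — 4 statements merged into one kernel-verified Lean document; each statement's English description precedes it below -/
import Mathlib

section
/- Let V be a matricial operator system inside Matrix (Fin d) (Fin d) ℂ, let B be a finite-dimensional C*-algebra, and let i : V → B be a unital complete order embedding that has the extension property and is rigid. If Φ : ℝ≥0 → (V →ₗ[ℂ] V) satisfies Φ(0) = id, Φ(s+t) = Φ(s) ∘ Φ(t) for all s,t ≥ 0, each Φ(t) is unital completely positive, and t ↦ Φ(t) is continuous in operator norm, then there exists Ψ : ℝ≥0 → (B →ₗ[ℂ] B) with Ψ(0) = id, Ψ(s+t) = Ψ(s) ∘ Ψ(t), each Ψ(t) unital completely positive, t ↦ Ψ(t) continuous in operator norm, and Ψ(t) ∘ i = i ∘ Φ(t) for all t ≥ 0. -/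
open scoped NNReal ComplexOrder

/-- The `(n*d) × (n*d)` block complex matrix associated to an `n × n` matrix whose entries
are `d × d` complex matrices. -/
def blockMat {n d : ℕ} (M : Fin n → Fin n → Matrix (Fin d) (Fin d) ℂ) :
    Matrix (Fin n × Fin d) (Fin n × Fin d) ℂ :=
  Matrix.of fun p q => M p.1 q.1 p.2 q.2

/-- An `n × n` matrix with entries in a subspace `V` of `d × d` complex matrices is positive if
the associated block complex matrix is positive semidefinite. -/
def PosOverV {d : ℕ} {V : Submodule ℂ (Matrix (Fin d) (Fin d) ℂ)} {n : ℕ}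
    (M : Fin n → Fin n → V) : Prop :=
  (blockMat fun k l => (M k l : Matrix (Fin d) (Fin d) ℂ)).PosSemidef

/-- Positivity of an element of the `n × n` matrices over a C*-algebra `B`: it is positive
iff it factors as `star y * y`. -/
def PosOverB {B : Type*} [Ring B] [StarRing B] {n : ℕ}
    (x : Matrix (Fin n) (Fin n) B) : Prop :=
  ∃ y : Matrix (Fin n) (Fin n) B, x = star y * y

section Defs

variable {d : ℕ} (V : Submodule ℂ (Matrix (Fin d) (Fin d) ℂ))
variable (B : Type*) [NormedRing B] [StarRing B] [CStarRing B] [NormedAlgebra ℂ B]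
  [CompleteSpace B] [StarModule ℂ B]

/-- A linear map on a matricial operator system `V` is unital completely positive. -/
def IsUCPVV (h1 : (1 : Matrix (Fin d) (Fin d) ℂ) ∈ V) (φ : V →ₗ[ℂ] V) : Prop :=
  φ ⟨1, h1⟩ = ⟨1, h1⟩ ∧
  ∀ (n : ℕ) (M : Fin n → Fin n → V), PosOverV M → PosOverV fun k l => φ (M k l)

/-- A linear map from a matricial operator system `V` into a C*-algebra `B` is unital
completely positive. -/
def IsUCPVB (h1 : (1 : Matrix (Fin d) (Fin d) ℂ) ∈ V) (θ : V →ₗ[ℂ] B) : Prop :=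
  θ ⟨1, h1⟩ = 1 ∧
  ∀ (n : ℕ) (M : Fin n → Fin n → V), PosOverV M →
    PosOverB (Matrix.of fun k l => θ (M k l))

/-- A linear map on a C*-algebra `B` is unital completely positive. -/
def IsUCPBB (ψ : B →ₗ[ℂ] B) : Prop :=
  ψ 1 = 1 ∧
  ∀ (n : ℕ) (x : Matrix (Fin n) (Fin n) B), PosOverB x → PosOverB (x.map ⇑ψ)

/-- `i : V → B` is a unital complete order embedding: it is unital and for every `n`, an
`n × n` matrix over `V` is positive iff its entrywise image under `i` is positive. -/
def IsUCOEmbedding (h1 : (1 : Matrix (Fin d) (Fin d) ℂ) ∈ V) (i : V →ₗ[ℂ] B) : Prop :=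
  (i ⟨1, h1⟩ = 1) ∧
  ∀ (n : ℕ) (M : Fin n → Fin n → V),
    PosOverV M ↔ PosOverB (Matrix.of fun k l => i (M k l))

/-- `i : V → B` has the extension property: every UCP map `θ : V → B` extends to a UCP map
on all of `B` through `i`. -/
def HasExtensionProperty (h1 : (1 : Matrix (Fin d) (Fin d) ℂ) ∈ V) (i : V →ₗ[ℂ] B) : Prop :=
  ∀ θ : V →ₗ[ℂ] B, IsUCPVB V B h1 θ →
    ∃ Θ : B →ₗ[ℂ] B, IsUCPBB B Θ ∧ ∀ v : V, Θ (i v) = θ v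

/-- `i : V → B` is rigid: the only UCP map on `B` fixing the image of `i` is the identity. -/
def IsRigid (i : V →ₗ[ℂ] B) : Prop :=
  ∀ ψ : B →ₗ[ℂ] B, IsUCPBB B ψ → (∀ v : V, ψ (i v) = i v) → ψ = LinearMap.id

end Defs

/-!
For `t ≥ 0` let `E t` be the set of UCP maps `ψ` on `B` with `ψ ∘ i = i ∘ Φ t`. By the extension
property every `E t` is nonempty, clearly `E s * E t ⊆ E (s + t)`, and rigidity gives `E 0 = {1}`.
As `B` is finite-dimensional, the UCP maps form a compact set and the graph of `E` is closed, so
`E t` shrinks to `1` as `t → 0`. Choosing `θ m ∈ E (1 / m)`, an ultrafilter limit `Ψ t` of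
`θ m ^ ⌊t m⌋₊` lies in `E t`; the semigroup law holds up to rounding errors of size
`O(‖θ m - 1‖) → 0`, hence exactly for `Ψ`, and `Ψ` is continuous because `Ψ t → 1` as `t → 0`.
-/

open Filter Topology

lemma Nat.floor_add_floor_le_floor_add {R : Type*} [Semiring R] [LinearOrder R]
    [IsStrictOrderedRing R] [FloorSemiring R] {a b : R} (ha : 0 ≤ a) (hb : 0 ≤ b) :
    ⌊a⌋₊ + ⌊b⌋₊ ≤ ⌊a + b⌋₊ :=
  Nat.le_floor <| by rw [Nat.cast_add]; gcongr <;> exact Nat.floor_le ‹_›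

lemma Nat.floor_add_le_floor_add_floor_add_one {R : Type*} [CommRing R] [LinearOrder R]
    [IsStrictOrderedRing R] [FloorSemiring R] {a b : R} (ha : 0 ≤ a) (hb : 0 ≤ b) :
    ⌊a + b⌋₊ ≤ ⌊a⌋₊ + ⌊b⌋₊ + 1 := by
  have : a + b < (⌊a⌋₊ + ⌊b⌋₊ + 2 : ℕ) := by
    push_cast
    linarith [Nat.lt_floor_add_one a, Nat.lt_floor_add_one b]
  have := (Nat.floor_lt (by positivity)).2 this
  omega

lemma norm_pow_sub_pow_mul_pow_le {A : Type*} [NormedRing A] {x : A} {C : ℝ}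
    (hC : ∀ n, ‖x ^ n‖ ≤ C) {p q r : ℕ} (h₁ : p + q ≤ r) (h₂ : r ≤ p + q + 1) :
    ‖x ^ r - x ^ p * x ^ q‖ ≤ C * ‖x - 1‖ := by
  rw [← pow_add]
  obtain rfl | rfl : r = p + q ∨ r = p + q + 1 := by omega
  · simpa using mul_nonneg ((norm_nonneg _).trans (hC 0)) (norm_nonneg (x - 1))
  · rw [pow_succ, ← mul_sub_one]
    exact (norm_mul_le _ _).trans (by gcongr; exact hC _)

lemma tendsto_nat_floor_mul_div_natCast {t : ℝ} (ht : 0 ≤ t) :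
    Tendsto (fun m : ℕ => (⌊t * m⌋₊ : ℝ) / m) atTop (𝓝 t) :=
  (tendsto_nat_floor_mul_div_atTop ht).comp tendsto_natCast_atTop_atTop

lemma continuous_of_map_add_of_tendsto_one {A : Type*} [NormedRing A] {Ψ : ℝ≥0 → A}
    (hadd : ∀ s t, Ψ (s + t) = Ψ s * Ψ t) {C : ℝ} (hC : ∀ t, ‖Ψ t‖ ≤ C)
    (h0 : Tendsto Ψ (𝓝 0) (𝓝 1)) : Continuous Ψ := by
  refine continuous_iff_continuousAt.2 fun t => tendsto_iff_norm_sub_tendsto_zero.2 ?_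
  have hsub (s : ℝ≥0) : Ψ s - Ψ t = (Ψ (s - t) - Ψ (t - s)) * Ψ (min s t) := by
    rw [sub_mul, ← hadd, ← hadd, tsub_add_min, min_comm, tsub_add_min]
  have hstep (u : ℝ≥0 → ℝ≥0) (hu : Tendsto u (𝓝 t) (𝓝 0)) :
      Tendsto (fun s => Ψ (u s)) (𝓝 t) (𝓝 1) := h0.comp hu
  have hsmall : Tendsto (fun s => Ψ (s - t) - Ψ (t - s)) (𝓝 t) (𝓝 0) := by
    simpa using (hstep _ (by simpa using (tendsto_id (x := 𝓝 t)).sub_const t)).sub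
      (hstep _ (by simpa using (tendsto_id (x := 𝓝 t)).const_sub t))
  refine squeeze_zero (fun s => norm_nonneg _) (fun s => ?_)
    (by simpa using hsmall.norm.mul_const C)
  rw [hsub]
  exact (norm_mul_le _ _).trans (mul_le_mul_of_nonneg_left (hC _) (norm_nonneg _))

structure IsSetValuedSemigroup {A : Type*} [Monoid A] [TopologicalSpace A]
    (E : ℝ≥0 → Set A) : Prop where
  exists_isCompact : ∃ K, IsCompact K ∧ ∀ t, E t ⊆ K
  nonempty : ∀ t, (E t).Nonempty
  mul_mem : ∀ {s t : ℝ≥0} {a b : A}, a ∈ E s → b ∈ E t → a * b ∈ E (s + t)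
  subset_zero : E 0 ⊆ {1}
  isClosed_graph : IsClosed {p : ℝ≥0 × A | p.2 ∈ E p.1}

namespace IsSetValuedSemigroup

section Monoid

variable {A : Type*} [Monoid A] [TopologicalSpace A] {E : ℝ≥0 → Set A}

lemma one_mem_zero (hE : IsSetValuedSemigroup E) : (1 : A) ∈ E 0 := by
  obtain ⟨a, ha⟩ := hE.nonempty 0
  rwa [← hE.subset_zero ha]

lemma pow_mem (hE : IsSetValuedSemigroup E) {t : ℝ≥0} {a : A} (ha : a ∈ E t) (n : ℕ) :
    a ^ n ∈ E (n * t) := by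
  induction n with
  | zero => simpa using hE.one_mem_zero
  | succ n ih => simpa [pow_succ, add_mul] using hE.mul_mem ih ha

lemma tendsto_one (hE : IsSetValuedSemigroup E) {ι : Type*} {l : Filter ι} {t : ι → ℝ≥0}
    {a : ι → A} (ht : Tendsto t l (𝓝 0)) (ha : ∀ i, a i ∈ E (t i)) : Tendsto a l (𝓝 1) := by
  obtain ⟨K, hK, hEK⟩ := hE.exists_isCompact
  refine tendsto_iff_ultrafilter _ _ _ |>.2 fun U hU => ?_
  obtain ⟨b, -, hb⟩ := hK.ultrafilter_le_nhds (U.map a)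
    (le_principal_iff.2 <| mem_map.2 <| univ_mem' fun i => hEK _ (ha i))
  have hb' : Tendsto a U (𝓝 b) := hb
  have hb0 : b ∈ E 0 := hE.isClosed_graph.mem_of_tendsto
    ((ht.mono_left hU).prodMk_nhds hb') (Eventually.of_forall ha)
  rwa [hE.subset_zero hb0] at hb'

end Monoid

variable {A : Type*} [NormedRing A] {E : ℝ≥0 → Set A}

lemma exists_norm_le (hE : IsSetValuedSemigroup E) : ∃ C, ∀ t, ∀ a ∈ E t, ‖a‖ ≤ C := by
  obtain ⟨K, hK, hEK⟩ := hE.exists_isCompact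
  obtain ⟨C, hC⟩ := isBounded_iff_forall_norm_le.1 hK.isBounded
  exact ⟨C, fun t a ha => hC a (hEK t ha)⟩

lemma exists_semigroup (hE : IsSetValuedSemigroup E) :
    ∃ Ψ : ℝ≥0 → A, (∀ t, Ψ t ∈ E t) ∧ ∀ s t, Ψ (s + t) = Ψ s * Ψ t := by
  obtain ⟨K, hK, hEK⟩ := hE.exists_isCompact
  obtain ⟨C, hC⟩ := hE.exists_norm_le
  choose θ hθ using fun m : ℕ => hE.nonempty (m : ℝ≥0)⁻¹
  have hθ1 : Tendsto θ atTop (𝓝 1) :=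
    hE.tendsto_one (tendsto_inv_atTop_zero.comp tendsto_natCast_atTop_atTop) hθ
  set k : ℕ → ℝ≥0 → ℕ := fun m t => ⌊(t : ℝ) * m⌋₊ with hk
  have hF (m : ℕ) (t : ℝ≥0) : θ m ^ k m t ∈ E (k m t / m) := by
    simpa [div_eq_mul_inv] using hE.pow_mem (hθ m) (k m t)
  have htime (t : ℝ≥0) : Tendsto (fun m => (k m t : ℝ≥0) / m) atTop (𝓝 t) := by
    rw [← NNReal.tendsto_coe]
    simpa using tendsto_nat_floor_mul_div_natCast t.2
  let U : Ultrafilter ℕ := .of atTop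
  have hU : (U : Filter ℕ) ≤ atTop := Ultrafilter.of_le _
  have hlim (t : ℝ≥0) : ∃ ψ, Tendsto (fun m => θ m ^ k m t) U (𝓝 ψ) := by
    obtain ⟨ψ, -, hψ⟩ := hK.ultrafilter_le_nhds (U.map fun m => θ m ^ k m t)
      (le_principal_iff.2 <| mem_map.2 <| univ_mem' fun m => hEK _ (hF m t))
    exact ⟨ψ, hψ⟩
  choose Ψ hΨ using hlim
  refine ⟨Ψ, fun t => ?_, fun s t => ?_⟩
  · exact hE.isClosed_graph.mem_of_tendsto (((htime t).mono_left hU).prodMk_nhds (hΨ t))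
      (Eventually.of_forall fun m => hF m t)
  · have hpow (m n : ℕ) : ‖θ m ^ n‖ ≤ C := hC _ _ (hE.pow_mem (hθ m) n)
    have herr :
        Tendsto (fun m => θ m ^ k m (s + t) - θ m ^ k m s * θ m ^ k m t) atTop (𝓝 0) := by
      refine squeeze_zero_norm (fun m => norm_pow_sub_pow_mul_pow_le (hpow m) ?_ ?_) ?_
      · simpa [hk, add_mul] using Nat.floor_add_floor_le_floor_add (by positivity) (by positivity)
      · simpa [hk, add_mul] using
          Nat.floor_add_le_floor_add_floor_add_one (by positivity) (by positivity)
      · simpa using ((hθ1.sub_const 1).norm.const_mul C)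
    exact sub_eq_zero.1 <| tendsto_nhds_unique ((hΨ (s + t)).sub ((hΨ s).mul (hΨ t)))
      (herr.mono_left hU)

theorem exists_continuous_semigroup (hE : IsSetValuedSemigroup E) :
    ∃ Ψ : ℝ≥0 → A, (∀ t, Ψ t ∈ E t) ∧ (∀ s t, Ψ (s + t) = Ψ s * Ψ t) ∧ Continuous Ψ := by
  obtain ⟨Ψ, hΨE, hadd⟩ := hE.exists_semigroup
  obtain ⟨C, hC⟩ := hE.exists_norm_le
  exact ⟨Ψ, hΨE, hadd, continuous_of_map_add_of_tendsto_one hadd (fun t => hC t _ (hΨE t))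
    (hE.tendsto_one tendsto_id hΨE)⟩

end IsSetValuedSemigroup

lemma IsUCPBB.comp {B : Type*} [NormedRing B] [StarRing B] [NormedAlgebra ℂ B]
    {ψ χ : B →ₗ[ℂ] B} (hψ : IsUCPBB B ψ) (hχ : IsUCPBB B χ) :
    IsUCPBB B (ψ.comp χ) :=
  ⟨by rw [LinearMap.comp_apply, hχ.1, hψ.1], fun n x hx => by
    rw [LinearMap.coe_comp, ← Matrix.map_map]; exact hψ.2 n _ (hχ.2 n x hx)⟩

section CStarAlgebra

variable {A : Type*} [CStarAlgebra A] [PartialOrder A] [StarOrderedRing A]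

lemma norm_sq_le_norm_star_mul_self_apply {n : ℕ} (y : Matrix (Fin n) (Fin n) A) (i j : Fin n) :
    ‖y i j‖ ^ 2 ≤ ‖(star y * y) j j‖ := by
  have hle : star (y i j) * y i j ≤ (star y * y) j j := by
    simpa [Matrix.mul_apply] using Finset.single_le_sum (f := fun l => star (y l j) * y l j)
      (fun l _ => star_mul_self_nonneg _) (Finset.mem_univ i)
  rw [sq, ← CStarRing.norm_star_mul_self]
  exact CStarAlgebra.norm_le_norm_of_nonneg_of_le (star_mul_self_nonneg _) hle

lemma isClosed_setOf_posOverB [FiniteDimensional ℂ A] (n : ℕ) :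
    IsClosed {x : Matrix (Fin n) (Fin n) A | PosOverB x} := by
  have : SequentialSpace (Matrix (Fin n) (Fin n) A) :=
    inferInstanceAs (SequentialSpace (Fin n → Fin n → A))
  refine IsSeqClosed.isClosed fun {z x} hz hzx => ?_
  choose y hy using hz
  have hdiag : Tendsto (fun m j => z m j j) atTop (𝓝 fun j => x j j) :=
    tendsto_pi_nhds.2 fun j => tendsto_pi_nhds.1 (tendsto_pi_nhds.1 hzx j) j
  obtain ⟨R, hR⟩ := isBounded_iff_forall_norm_le.1 (Metric.isBounded_range_of_tendsto _ hdiag)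
  have hy_mem (m : ℕ) :
      (y m : Fin n → Fin n → A) ∈ Metric.closedBall (0 : Fin n → Fin n → A) √R := by
    refine mem_closedBall_zero_iff.2 <| pi_norm_le_iff_of_nonneg (Real.sqrt_nonneg _) |>.2
      fun i => pi_norm_le_iff_of_nonneg (Real.sqrt_nonneg _) |>.2 fun j => ?_
    refine Real.le_sqrt_of_sq_le <| (norm_sq_le_norm_star_mul_self_apply (y m) i j).trans ?_
    rw [← hy m]
    exact (norm_le_pi_norm (fun j => z m j j) j).trans (hR _ ⟨m, rfl⟩)
  obtain ⟨Y, -, φ, hφ, hY⟩ :=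
    (isCompact_closedBall (0 : Fin n → Fin n → A) √R).tendsto_subseq hy_mem
  refine ⟨Y, tendsto_nhds_unique (hzx.comp hφ.tendsto_atTop) ?_⟩
  have hcont : Continuous fun y : Matrix (Fin n) (Fin n) A => star y * y :=
    continuous_star.matrix_mul continuous_id
  rw [show z ∘ φ = (fun y => star y * y) ∘ y ∘ φ from funext fun m => hy (φ m)]
  exact (hcont.tendsto Y).comp hY

lemma posOverB_of_fin_one_iff (b : A) :
    PosOverB (Matrix.of fun _ _ => b : Matrix (Fin 1) (Fin 1) A) ↔ 0 ≤ b := by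
  rw [CStarAlgebra.nonneg_iff_eq_star_mul_self, PosOverB]
  constructor
  · rintro ⟨y, hy⟩
    exact ⟨y 0 0, by simpa [Matrix.mul_apply] using congrFun (congrFun hy 0) 0⟩
  · rintro ⟨c, rfl⟩
    exact ⟨Matrix.of fun _ _ => c, by ext i j; simp [Matrix.mul_apply]⟩

lemma IsUCPBB.map_nonneg {ψ : A →ₗ[ℂ] A} (hψ : IsUCPBB A ψ) {b : A} (hb : 0 ≤ b) :
    0 ≤ ψ b :=
  (posOverB_of_fin_one_iff _).1 (hψ.2 1 _ ((posOverB_of_fin_one_iff b).2 hb))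

lemma IsUCPBB.norm_apply_le {ψ : A →ₗ[ℂ] A} (hψ : IsUCPBB A ψ) (a : A) :
    ‖ψ a‖ ≤ 4 * ‖(1 : A)‖ * ‖a‖ := by
  let f : A →ₚ[ℂ] A := .mk₀ ψ fun _ => hψ.map_nonneg
  obtain ⟨x, hx_nonneg, hx_norm, hx⟩ := CStarAlgebra.exists_sum_four_nonneg a
  calc ‖ψ a‖ ≤ ∑ k : Fin 4, ‖f (x k)‖ := by
        rw [hx, map_sum]
        refine (norm_sum_le _ _).trans (le_of_eq ?_)
        simp only [map_smul, norm_smul, norm_pow, Complex.norm_I, one_pow, one_mul]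
        rfl
    _ ≤ ∑ _k : Fin 4, ‖(1 : A)‖ * ‖a‖ := by
        gcongr with k
        calc ‖f (x k)‖ ≤ ‖f 1‖ * ‖x k‖ := f.norm_apply_le_of_nonneg _ (hx_nonneg k)
          _ ≤ ‖(1 : A)‖ * ‖a‖ := by
            rw [show f 1 = 1 from hψ.1]; gcongr; exact hx_norm k
    _ = 4 * ‖(1 : A)‖ * ‖a‖ := by simp; ring

lemma isClosed_setOf_isUCPBB [FiniteDimensional ℂ A] :
    IsClosed {ψ : A →L[ℂ] A | IsUCPBB A ψ} := by
  have hunit : IsClosed {ψ : A →L[ℂ] A | ψ 1 = 1} :=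
    isClosed_eq (continuous_id.clm_apply continuous_const) continuous_const
  have hpos (n : ℕ) (x : Matrix (Fin n) (Fin n) A) :
      IsClosed {ψ : A →L[ℂ] A | PosOverB (x.map ψ)} := by
    have hc : Continuous fun ψ : A →L[ℂ] A => x.map ψ :=
      continuous_matrix fun k l => continuous_id.clm_apply continuous_const
    exact (isClosed_setOf_posOverB (A := A) n).preimage hc
  convert hunit.inter (isClosed_iInter fun n => isClosed_iInter fun x =>
    isClosed_iInter fun (_ : PosOverB x) => hpos n x) using 1
  ext ψ
  simp [IsUCPBB]

lemma isCompact_setOf_isUCPBB [FiniteDimensional ℂ A] :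
    IsCompact {ψ : A →L[ℂ] A | IsUCPBB A ψ} := by
  have hbdd : ∀ ψ ∈ {ψ : A →L[ℂ] A | IsUCPBB A ψ}, ‖ψ‖ ≤ 4 * ‖(1 : A)‖ := fun ψ hψ =>
    ψ.opNorm_le_bound (by positivity) (IsUCPBB.norm_apply_le hψ)
  exact Metric.isCompact_of_isClosed_isBounded isClosed_setOf_isUCPBB
    (isBounded_iff_forall_norm_le.2 ⟨_, hbdd⟩)

end CStarAlgebra

section Extensions

variable {d : ℕ} {V : Submodule ℂ (Matrix (Fin d) (Fin d) ℂ)}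
  {h1 : (1 : Matrix (Fin d) (Fin d) ℂ) ∈ V}
  {B : Type*} [NormedRing B] [StarRing B] [NormedAlgebra ℂ B]

lemma IsUCOEmbedding.isUCPVB_comp {i : V →ₗ[ℂ] B} (hi : IsUCOEmbedding V B h1 i)
    {φ : V →ₗ[ℂ] V} (hφ : IsUCPVV V h1 φ) : IsUCPVB V B h1 (i.comp φ) :=
  ⟨by rw [LinearMap.comp_apply, hφ.1, hi.1], fun n M hM => (hi.2 n _).1 (hφ.2 n M hM)⟩

variable (V B) in
def ucpExtensions (i : V →ₗ[ℂ] B) (φ : V →ₗ[ℂ] V) : Set (B →L[ℂ] B) :=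
  {ψ | IsUCPBB B ψ ∧ ∀ v, ψ (i v) = i (φ v)}

variable {i : V →ₗ[ℂ] B}

lemma ucpExtensions_nonempty [FiniteDimensional ℂ B] (hi : IsUCOEmbedding V B h1 i)
    (hext : HasExtensionProperty V B h1 i) {φ : V →ₗ[ℂ] V} (hφ : IsUCPVV V h1 φ) :
    (ucpExtensions V B i φ).Nonempty := by
  obtain ⟨Θ, hΘ, hΘi⟩ := hext _ (hi.isUCPVB_comp hφ)
  exact ⟨LinearMap.toContinuousLinearMap Θ, hΘ, hΘi⟩

lemma mul_mem_ucpExtensions {φ φ' : V →ₗ[ℂ] V} {ψ ψ' : B →L[ℂ] B}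
    (hψ : ψ ∈ ucpExtensions V B i φ) (hψ' : ψ' ∈ ucpExtensions V B i φ') :
    ψ * ψ' ∈ ucpExtensions V B i (φ.comp φ') :=
  ⟨hψ.1.comp hψ'.1, fun v => by
    change ψ (ψ' (i v)) = _
    rw [hψ'.2, hψ.2, LinearMap.comp_apply]⟩

lemma ucpExtensions_id_subset (hrig : IsRigid V B i) :
    ucpExtensions V B i LinearMap.id ⊆ {1} := fun _ hψ =>
  ContinuousLinearMap.coe_injective <| hrig _ hψ.1 hψ.2

lemma isClosed_graph_ucpExtensions {A : Type*} [CStarAlgebra A] [PartialOrder A]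
    [StarOrderedRing A] [FiniteDimensional ℂ A] {i : V →ₗ[ℂ] A}
    {T : Type*} [TopologicalSpace T] {Φ : T → V →ₗ[ℂ] V}
    (hΦ : Continuous fun t => LinearMap.toContinuousLinearMap (Φ t)) :
    IsClosed {p : T × (A →L[ℂ] A) | p.2 ∈ ucpExtensions V A i (Φ p.1)} := by
  have hi : Continuous i := LinearMap.continuous_of_finiteDimensional i
  have hΦv (v : V) : Continuous fun t => Φ t v := by
    simpa [Function.comp_def] using (continuous_eval_const v).comp hΦ
  have hset : {p : T × (A →L[ℂ] A) | p.2 ∈ ucpExtensions V A i (Φ p.1)} =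
      Prod.snd ⁻¹' {ψ : A →L[ℂ] A | IsUCPBB A ψ} ∩ ⋂ v, {p | p.2 (i v) = i (Φ p.1 v)} := by
    ext; simp [ucpExtensions]
  rw [hset]
  exact (isClosed_setOf_isUCPBB.preimage continuous_snd).inter <| isClosed_iInter fun v =>
    isClosed_eq (continuous_snd.clm_apply continuous_const)
      (hi.comp ((hΦv v).comp continuous_fst))

end Extensions

theorem extension_of_ucp_semigroups_general
    {d : ℕ} (V : Submodule ℂ (Matrix (Fin d) (Fin d) ℂ))
    (h1 : (1 : Matrix (Fin d) (Fin d) ℂ) ∈ V)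
    (B : Type*) [NormedRing B] [StarRing B] [CStarRing B] [NormedAlgebra ℂ B]
    [CompleteSpace B] [StarModule ℂ B] [FiniteDimensional ℂ B]
    (i : V →ₗ[ℂ] B)
    (hemb : IsUCOEmbedding V B h1 i)
    (hext : HasExtensionProperty V B h1 i)
    (hrig : IsRigid V B i)
    (Φ : ℝ≥0 → (V →ₗ[ℂ] V))
    (hΦ0 : Φ 0 = LinearMap.id)
    (hΦadd : ∀ s t : ℝ≥0, Φ (s + t) = (Φ s).comp (Φ t))
    (hΦucp : ∀ t : ℝ≥0, IsUCPVV V h1 (Φ t))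
    (hΦcont : Continuous fun t : ℝ≥0 => LinearMap.toContinuousLinearMap (Φ t)) :
    ∃ Ψ : ℝ≥0 → (B →ₗ[ℂ] B),
      Ψ 0 = LinearMap.id ∧
      (∀ s t : ℝ≥0, Ψ (s + t) = (Ψ s).comp (Ψ t)) ∧
      (∀ t : ℝ≥0, IsUCPBB B (Ψ t)) ∧
      Continuous (fun t : ℝ≥0 => LinearMap.toContinuousLinearMap (Ψ t)) ∧
      ∀ (t : ℝ≥0) (v : V), Ψ t (i v) = i (Φ t v) := by
  let _ : CStarAlgebra B := {}
  let _ : PartialOrder B := CStarAlgebra.spectralOrder B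
  let _ : StarOrderedRing B := CStarAlgebra.spectralOrderedRing B
  have hE : IsSetValuedSemigroup fun t => ucpExtensions V B i (Φ t) :=
    { exists_isCompact := ⟨_, isCompact_setOf_isUCPBB, fun _ _ hψ => hψ.1⟩
      nonempty := fun t => ucpExtensions_nonempty hemb hext (hΦucp t)
      mul_mem := fun hψ hψ' => hΦadd _ _ ▸ mul_mem_ucpExtensions hψ hψ'
      subset_zero := hΦ0 ▸ ucpExtensions_id_subset hrig
      isClosed_graph := isClosed_graph_ucpExtensions hΦcont }
  obtain ⟨Ψ, hΨE, hadd, hcont⟩ := hE.exists_continuous_semigroup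
  refine ⟨fun t => Ψ t, ?_, fun s t => ?_, fun t => (hΨE t).1, hcont, fun t => (hΨE t).2⟩
  · change ((Ψ 0 : B →L[ℂ] B) : B →ₗ[ℂ] B) = LinearMap.id
    rw [hE.subset_zero (hΨE 0)]
    rfl
  · change ((Ψ (s + t) : B →L[ℂ] B) : B →ₗ[ℂ] B) = _
    rw [hadd]
    rfl

/-- **Extension of semigroups** (Theorem 3.2): any operator-norm continuous unital completely
positive one-parameter semigroup on a matricial operator system `V` extends, through a rigid
unital complete order embedding with the extension property `i : V → B` into a
finite-dimensional C*-algebra `B`, to a continuous UCP semigroup on `B`. -/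
theorem extension_of_ucp_semigroups
    {d : ℕ} (V : Submodule ℂ (Matrix (Fin d) (Fin d) ℂ))
    (h1 : (1 : Matrix (Fin d) (Fin d) ℂ) ∈ V)
    (hstar : ∀ v ∈ V, v.conjTranspose ∈ V)
    (B : Type*) [NormedRing B] [StarRing B] [CStarRing B] [NormedAlgebra ℂ B]
    [CompleteSpace B] [StarModule ℂ B] [FiniteDimensional ℂ B]
    (i : V →ₗ[ℂ] B)
    (hemb : IsUCOEmbedding V B h1 i)
    (hext : HasExtensionProperty V B h1 i)
    (hrig : IsRigid V B i)
    (Φ : ℝ≥0 → (V →ₗ[ℂ] V))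
    (hΦ0 : Φ 0 = LinearMap.id)
    (hΦadd : ∀ s t : ℝ≥0, Φ (s + t) = (Φ s).comp (Φ t))
    (hΦucp : ∀ t : ℝ≥0, IsUCPVV V h1 (Φ t))
    (hΦcont : Continuous fun t : ℝ≥0 => LinearMap.toContinuousLinearMap (Φ t)) :
    ∃ Ψ : ℝ≥0 → (B →ₗ[ℂ] B),
      Ψ 0 = LinearMap.id ∧
      (∀ s t : ℝ≥0, Ψ (s + t) = (Ψ s).comp (Ψ t)) ∧
      (∀ t : ℝ≥0, IsUCPBB B (Ψ t)) ∧
      Continuous (fun t : ℝ≥0 => LinearMap.toContinuousLinearMap (Ψ t)) ∧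
      ∀ (t : ℝ≥0) (v : V), Ψ t (i v) = i (Φ t v) :=
  extension_of_ucp_semigroups_general V h1 B i hemb hext hrig Φ hΦ0 hΦadd hΦucp hΦcont
end

section
/- Let V be a matricial operator system inside Matrix (Fin d) (Fin d) ℂ, let B be a C*-algebra, and let i : V → B be a UCP map with the extension property. If Φ : ℕ → (V →ₗ[ℂ] V) satisfies Φ(0) = id and Φ(n+m) = Φ(n) ∘ Φ(m) for all n,m ∈ ℕ, with each Φ(n) unital completely positive, then there exists Ψ : ℕ → (B →ₗ[ℂ] B) with Ψ(0) = id, Ψ(n+m) = Ψ(n) ∘ Ψ(m), each Ψ(n) unital completely positive, and Ψ(n) ∘ i = i ∘ Φ(n) for all n ∈ ℕ. -/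
open scoped NNReal ComplexOrder

/-- **Extension of discrete-time semigroups** (Proposition 3.1): a discrete-time semigroup of
unital completely positive maps on a matricial operator system `V` extends, through a UCP map
`i : V → B` with the extension property into a C*-algebra `B`, to a discrete-time UCP
semigroup on `B`. -/
theorem extension_of_discrete_ucp_semigroups
    {d : ℕ} (V : Submodule ℂ (Matrix (Fin d) (Fin d) ℂ))
    (h1 : (1 : Matrix (Fin d) (Fin d) ℂ) ∈ V)
    (hstar : ∀ v ∈ V, v.conjTranspose ∈ V)
    (B : Type*) [NormedRing B] [StarRing B] [CStarRing B] [NormedAlgebra ℂ B]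
    [CompleteSpace B] [StarModule ℂ B]
    (i : V →ₗ[ℂ] B)
    (hiucp : IsUCPVB V B h1 i)
    (hext : HasExtensionProperty V B h1 i)
    (Φ : ℕ → (V →ₗ[ℂ] V))
    (hΦ0 : Φ 0 = LinearMap.id)
    (hΦadd : ∀ n m : ℕ, Φ (n + m) = (Φ n).comp (Φ m))
    (hΦucp : ∀ n : ℕ, IsUCPVV V h1 (Φ n)) :
    ∃ Ψ : ℕ → (B →ₗ[ℂ] B),
      Ψ 0 = LinearMap.id ∧
      (∀ n m : ℕ, Ψ (n + m) = (Ψ n).comp (Ψ m)) ∧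
      (∀ n : ℕ, IsUCPBB B (Ψ n)) ∧
      ∀ (n : ℕ) (v : V), Ψ n (i v) = i (Φ n v) := by
  -- The map θ = i ∘ Φ 1 is UCP from V to B
  have hθ : IsUCPVB V B h1 (i.comp (Φ 1)) := by
    refine ⟨?_, ?_⟩
    · simp [LinearMap.comp_apply, (hΦucp 1).1, hiucp.1]
    · intro n M hM
      exact hiucp.2 n _ ((hΦucp 1).2 n M hM)
  obtain ⟨Θ, hΘucp, hΘext⟩ := hext _ hθ
  -- UCP maps compose
  have hcomp : ∀ ψ₁ ψ₂ : B →ₗ[ℂ] B, IsUCPBB B ψ₁ → IsUCPBB B ψ₂ →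
      IsUCPBB B (ψ₁.comp ψ₂) := by
    intro ψ₁ ψ₂ h₁ h₂
    refine ⟨by simp [LinearMap.comp_apply, h₂.1, h₁.1], ?_⟩
    intro n x hx
    have := h₁.2 n _ (h₂.2 n x hx)
    rwa [Matrix.map_map] at this
  have hid : IsUCPBB B (LinearMap.id : B →ₗ[ℂ] B) := by
    refine ⟨rfl, ?_⟩
    intro n x hx
    have : x.map ⇑(LinearMap.id : B →ₗ[ℂ] B) = x := by
      ext k l; simp
    rwa [this]
  refine ⟨fun n => Θ ^ n, ?_, ?_, ?_, ?_⟩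
  · show Θ ^ 0 = LinearMap.id
    rw [pow_zero]; rfl
  · intro n m
    show Θ ^ (n + m) = (Θ ^ n).comp (Θ ^ m)
    rw [pow_add]; rfl
  · intro n
    induction n with
    | zero =>
      show IsUCPBB B (Θ ^ 0)
      rw [pow_zero]
      exact hid
    | succ k ih =>
      show IsUCPBB B (Θ ^ (k + 1))
      rw [pow_succ]
      exact hcomp _ _ ih hΘucp
  · intro n
    induction n with
    | zero =>
      intro v
      show (Θ ^ 0) (i v) = i (Φ 0 v)
      rw [pow_zero, hΦ0]; rfl
    | succ k ih =>
      intro v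
      have h1' : (Θ ^ (k + 1)) (i v) = (Θ ^ k) (Θ (i v)) := by
        rw [pow_succ]; rfl
      have h2' : Θ (i v) = i (Φ 1 v) := hΘext v
      show (Θ ^ (k + 1)) (i v) = i (Φ (k + 1) v)
      rw [h1', h2', ih (Φ 1 v), hΦadd k 1]
      rfl
end

section
/- Let X be a complex Banach space, let φ : X →L[ℂ] X satisfy ‖φ‖ ≤ 1, and let β₁, β₂ be real with 0 < β₁ ≤ 1 and 0 < β₂ ≤ 1. Then H_{β₁·β₂}(φ) = H_{β₁}(H_{β₂}(φ)); here H_{β₁} may be applied to H_{β₂}(φ) because ‖H_{β₂}(φ)‖ ≤ 1. -/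
/-!
Writing `t = (1 - β) • a`, which has norm `< 1`, the series is `β • a * ∑ tᵏ = β • a * (1 - t)⁻¹`,
so `H_β(a)` is the unique `b` with `b * (1 - (1 - β) • a) = β • a`. If `ψ = H_{β₂}(φ)`, this
relation for `ψ` gives `(1 - (1 - β₁) • ψ) * (1 - (1 - β₂) • φ) = 1 - (1 - β₁ β₂) • φ`, and
multiplying the relation for `H_{β₁}(ψ)` on the right by `1 - (1 - β₂) • φ` turns it into the
relation defining `H_{β₁ β₂}(φ)`.
-/

/-- For a continuous linear operator `φ` on a complex Banach space and `0 < β ≤ 1`,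
`Hmap β φ = ∑' k, β(1-β)^k • φ^(k+1)`. -/
noncomputable def Hmap {X : Type*} [NormedAddCommGroup X] [NormedSpace ℂ X]
    (β : ℝ) (φ : X →L[ℂ] X) : X →L[ℂ] X :=
  ∑' k : ℕ, (β * (1 - β) ^ k) • φ ^ (k + 1)

lemma norm_one_sub_smul_lt_one {E : Type*} [SeminormedAddCommGroup E] [NormedSpace ℝ E]
    {β : ℝ} {a : E} (hβ0 : 0 < β) (hβ1 : β ≤ 1) (ha : ‖a‖ ≤ 1) : ‖(1 - β) • a‖ < 1 := by
  rw [norm_smul, Real.norm_of_nonneg (sub_nonneg.2 hβ1)]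
  nlinarith [norm_nonneg a]

lemma one_sub_smul_mul_one_sub_smul {R A : Type*} [CommRing R] [Ring A] [Algebra R A]
    {β₁ β₂ : R} {a b : A} (hb : b * (1 - (1 - β₂) • a) = β₂ • a) :
    (1 - (1 - β₁) • b) * (1 - (1 - β₂) • a) = 1 - (1 - β₁ * β₂) • a := by
  rw [sub_mul, one_mul, smul_mul_assoc, hb, smul_smul, sub_sub, ← add_smul]
  congr 2
  ring

section SeriesOfPowers

variable {A : Type*} [NormedRing A] [NormedAlgebra ℝ A] {β : ℝ} {a : A}

lemma norm_tsum_smul_pow_succ_le_one (hβ0 : 0 < β) (hβ1 : β ≤ 1) (ha : ‖a‖ ≤ 1) :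
    ‖∑' k : ℕ, (β * (1 - β) ^ k) • a ^ (k + 1)‖ ≤ 1 := by
  have hq0 : 0 ≤ 1 - β := sub_nonneg.2 hβ1
  have hcoeff : HasSum (fun k : ℕ => β * (1 - β) ^ k) 1 := by
    simpa [hβ0.ne'] using (hasSum_geometric_of_lt_one hq0 (by linarith)).mul_left β
  refine tsum_of_norm_bounded hcoeff fun k => ?_
  have hc : 0 ≤ β * (1 - β) ^ k := by positivity
  calc ‖(β * (1 - β) ^ k) • a ^ (k + 1)‖ = β * (1 - β) ^ k * ‖a ^ (k + 1)‖ := by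
        rw [norm_smul, Real.norm_of_nonneg hc]
    _ ≤ β * (1 - β) ^ k * 1 := by
        gcongr
        exact (norm_pow_le' a k.succ_pos).trans (pow_le_one₀ (norm_nonneg a) ha)
    _ = β * (1 - β) ^ k := mul_one _

variable [HasSummableGeomSeries A]

lemma tsum_smul_pow_succ_eq_smul_mul_tsum_pow (h : ‖(1 - β) • a‖ < 1) :
    ∑' k : ℕ, (β * (1 - β) ^ k) • a ^ (k + 1) = β • a * ∑' k : ℕ, ((1 - β) • a) ^ k := by
  have hs := summable_geometric_of_norm_lt_one h
  rw [smul_mul_assoc, ← hs.tsum_mul_left, ← (hs.mul_left a).tsum_const_smul]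
  congr 1 with k
  rw [smul_pow, mul_smul_comm, ← pow_succ', mul_smul]

lemma tsum_smul_pow_succ_eq_iff (hβ0 : 0 < β) (hβ1 : β ≤ 1) (ha : ‖a‖ ≤ 1) {b : A} :
    ∑' k : ℕ, (β * (1 - β) ^ k) • a ^ (k + 1) = b ↔ b * (1 - (1 - β) • a) = β • a := by
  have ht := norm_one_sub_smul_lt_one hβ0 hβ1 ha
  rw [tsum_smul_pow_succ_eq_smul_mul_tsum_pow ht]
  constructor
  · rintro rfl
    rw [mul_assoc, geom_series_mul_neg _ ht, mul_one]
  · intro hb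
    rw [← hb, mul_assoc, mul_neg_geom_series _ ht, mul_one]

end SeriesOfPowers

/-- The semigroup property `H_{β₁·β₂} = H_{β₁} ∘ H_{β₂}` of the resolvent re-expansion maps;
`H_{β₁}` may be applied to `H_{β₂}(φ)` since `‖H_{β₂}(φ)‖ ≤ 1`. -/
theorem Hmap_mul
    {X : Type*} [NormedAddCommGroup X] [NormedSpace ℂ X] [CompleteSpace X]
    (φ : X →L[ℂ] X) (hφ : ‖φ‖ ≤ 1)
    (β₁ β₂ : ℝ) (hβ₁0 : 0 < β₁) (hβ₁1 : β₁ ≤ 1) (hβ₂0 : 0 < β₂) (hβ₂1 : β₂ ≤ 1) :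
    ‖Hmap β₂ φ‖ ≤ 1 ∧ Hmap (β₁ * β₂) φ = Hmap β₁ (Hmap β₂ φ) := by
  set ψ := Hmap β₂ φ
  have hψ : ‖ψ‖ ≤ 1 := norm_tsum_smul_pow_succ_le_one hβ₂0 hβ₂1 hφ
  refine ⟨hψ, ?_⟩
  have hψφ : ψ * (1 - (1 - β₂) • φ) = β₂ • φ := (tsum_smul_pow_succ_eq_iff hβ₂0 hβ₂1 hφ).1 rfl
  have hHψ : Hmap β₁ ψ * (1 - (1 - β₁) • ψ) = β₁ • ψ :=
    (tsum_smul_pow_succ_eq_iff hβ₁0 hβ₁1 hψ).1 rfl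
  refine (tsum_smul_pow_succ_eq_iff (mul_pos hβ₁0 hβ₂0) (mul_le_one₀ hβ₁1 hβ₂0.le hβ₂1) hφ).2 ?_
  calc Hmap β₁ ψ * (1 - (1 - β₁ * β₂) • φ)
      = Hmap β₁ ψ * (1 - (1 - β₁) • ψ) * (1 - (1 - β₂) • φ) := by
        rw [mul_assoc, one_sub_smul_mul_one_sub_smul hψφ]
    _ = (β₁ * β₂) • φ := by rw [hHψ, smul_mul_assoc, hψφ, smul_smul]
end

section
/- Let a, b, c, ω, t be real numbers, set θ := ω·t, and let U := Matrix.exp ℂ ((θ/2) • (Complex.I • Y)) ∈ Matrix (Fin 2) (Fin 2) ℂ. Then U * (a•1 + b•X + c•Z) * Matrix.exp ℂ (−(θ/2) • (Complex.I • Y)) = a•1 + (b·cos θ − c·sin θ)•X + (b·sin θ + c·cos θ)•Z. -/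
open scoped ComplexOrder

/-- The Pauli matrix `X`. -/
def pauliX : Matrix (Fin 2) (Fin 2) ℂ := !![0, 1; 1, 0]

/-- The Pauli matrix `Y`. -/
def pauliY : Matrix (Fin 2) (Fin 2) ℂ := !![0, -Complex.I; Complex.I, 0]

/-- The Pauli matrix `Z`. -/
def pauliZ : Matrix (Fin 2) (Fin 2) ℂ := !![1, 0; 0, -1]

/-!
`J = i • Y` squares to `-1`, so the algebra map `ℂ → M₂(ℂ)` sending `i` to `J` carries
`e^{iθ}` to `exp (θ • J) = cos θ • 1 + sin θ • J`. The matrices `X` and `Z` anticommute with `J`,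
hence conjugating them by `exp (θ/2 • J)` is the same as multiplying them by `exp (θ • J)`, and
`J X = Z`, `J Z = -X` make this the rotation by `θ`.
-/

open NormedSpace

namespace NormedSpace

variable {A : Type*} [NormedRing A]

theorem exp_smul_of_mul_self_eq_neg_one [NormedAlgebra ℝ A] [Algebra ℚ A] {J : A}
    (hJ : J * J = -1) (θ : ℝ) : exp (θ • J) = Real.cos θ • 1 + Real.sin θ • J := by
  let φ : ℂ →ₐ[ℝ] A := Complex.liftAux J hJ
  have hφ : Continuous φ := φ.toLinearMap.continuous_of_finiteDimensional
  have hθJ : θ • J = φ (θ * Complex.I) := by simp [φ]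
  rw [hθJ, ← map_exp φ hφ, ← Complex.exp_eq_exp_ℂ, Complex.liftAux_apply,
    Complex.exp_ofReal_mul_I_re, Complex.exp_ofReal_mul_I_im, Algebra.algebraMap_eq_smul_one]

variable [NormedAlgebra ℚ A] [CompleteSpace A] {x v : A}

theorem exp_mul_mul_exp_neg_of_commute (h : Commute v x) : exp x * v * exp (-x) = v := by
  simpa only [neg_neg] using h.neg_right.exp_neg_mul_mul_exp_eq_self

theorem exp_mul_mul_exp_neg_of_anticommute (h : v * x = -x * v) :
    exp x * v * exp (-x) = exp (2 • x) * v := by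
  have hv : v * exp (-x) = exp x * v := SemiconjBy.exp_right (by simp [SemiconjBy, h])
  rw [mul_assoc, hv, ← mul_assoc, two_smul, exp_add_of_commute (Commute.refl x)]

end NormedSpace

theorem I_smul_pauliY_mul_self : (Complex.I • pauliY) * (Complex.I • pauliY) = -1 := by
  ext i j; fin_cases i <;> fin_cases j <;> simp [pauliY, Matrix.mul_apply]

theorem I_smul_pauliY_mul_pauliX : (Complex.I • pauliY) * pauliX = pauliZ := by
  ext i j; fin_cases i <;> fin_cases j <;> simp [pauliX, pauliY, pauliZ, Matrix.mul_apply]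

theorem I_smul_pauliY_mul_pauliZ : (Complex.I • pauliY) * pauliZ = -pauliX := by
  ext i j; fin_cases i <;> fin_cases j <;> simp [pauliX, pauliY, pauliZ, Matrix.mul_apply]

theorem pauliX_mul_I_smul_pauliY : pauliX * (Complex.I • pauliY) = -pauliZ := by
  ext i j; fin_cases i <;> fin_cases j <;> simp [pauliX, pauliY, pauliZ, Matrix.mul_apply]

theorem pauliZ_mul_I_smul_pauliY : pauliZ * (Complex.I • pauliY) = pauliX := by
  ext i j; fin_cases i <;> fin_cases j <;> simp [pauliX, pauliY, pauliZ, Matrix.mul_apply]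

theorem rebit_rotation_general (a b c : ℝ) (θ : ℝ) :
    NormedSpace.exp (((θ : ℂ) / 2) • (Complex.I • pauliY)) *
        ((a : ℂ) • (1 : Matrix (Fin 2) (Fin 2) ℂ) + (b : ℂ) • pauliX + (c : ℂ) • pauliZ) *
        NormedSpace.exp ((-((θ : ℂ) / 2)) • (Complex.I • pauliY)) =
      (a : ℂ) • (1 : Matrix (Fin 2) (Fin 2) ℂ) +
        ((b * Real.cos θ - c * Real.sin θ : ℝ) : ℂ) • pauliX +
        ((b * Real.sin θ + c * Real.cos θ : ℝ) : ℂ) • pauliZ := by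
  -- `exp` does not depend on the norm; any matrix norm makes the Banach-algebra lemmas apply.
  open scoped Matrix.Norms.Operator in
  set x := ((θ : ℂ) / 2) • (Complex.I • pauliY) with hx
  have h1 : exp x * 1 * exp (-x) = 1 := exp_mul_mul_exp_neg_of_commute (Commute.one_left x)
  have hX : exp x * pauliX * exp (-x) = exp (2 • x) * pauliX :=
    exp_mul_mul_exp_neg_of_anticommute (by
      rw [hx, mul_smul_comm, neg_mul, smul_mul_assoc, pauliX_mul_I_smul_pauliY,
        I_smul_pauliY_mul_pauliX, smul_neg])
  have hZ : exp x * pauliZ * exp (-x) = exp (2 • x) * pauliZ :=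
    exp_mul_mul_exp_neg_of_anticommute (by
      rw [hx, mul_smul_comm, neg_mul, smul_mul_assoc, pauliZ_mul_I_smul_pauliY,
        I_smul_pauliY_mul_pauliZ, smul_neg, neg_neg])
  have hrot : exp (2 • x) = Real.cos θ • 1 + Real.sin θ • (Complex.I • pauliY) := by
    rw [hx, two_smul, ← add_smul, add_halves, Complex.coe_smul]
    exact exp_smul_of_mul_self_eq_neg_one I_smul_pauliY_mul_self θ
  have hrotX : exp (2 • x) * pauliX = Real.cos θ • pauliX + Real.sin θ • pauliZ := by
    rw [hrot, add_mul, smul_mul_assoc, one_mul, smul_mul_assoc, I_smul_pauliY_mul_pauliX]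
  have hrotZ : exp (2 • x) * pauliZ = Real.cos θ • pauliZ - Real.sin θ • pauliX := by
    rw [hrot, add_mul, smul_mul_assoc, one_mul, smul_mul_assoc, I_smul_pauliY_mul_pauliZ,
      smul_neg, sub_eq_add_neg]
  rw [neg_smul, mul_add, mul_add, add_mul, add_mul, mul_smul_comm, mul_smul_comm, mul_smul_comm,
    smul_mul_assoc, smul_mul_assoc, smul_mul_assoc, h1, hX, hZ, hrotX, hrotZ]
  simp only [← Complex.coe_smul]
  push_cast
  module

/-- The one-parameter group generated by the Hamiltonian `(ω/2)Y` acts on the rebit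
`span{1, X, Z}` as the rotation with angular speed `ω`. -/
theorem rebit_rotation (a b c ω t : ℝ) (θ : ℝ) (hθ : θ = ω * t) :
    NormedSpace.exp (((θ : ℂ) / 2) • (Complex.I • pauliY)) *
        ((a : ℂ) • (1 : Matrix (Fin 2) (Fin 2) ℂ) + (b : ℂ) • pauliX + (c : ℂ) • pauliZ) *
        NormedSpace.exp ((-((θ : ℂ) / 2)) • (Complex.I • pauliY)) =
      (a : ℂ) • (1 : Matrix (Fin 2) (Fin 2) ℂ) +
        ((b * Real.cos θ - c * Real.sin θ : ℝ) : ℂ) • pauliX +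
        ((b * Real.sin θ + c * Real.cos θ : ℝ) : ℂ) • pauliZ :=
  rebit_rotation_general a b c θ
end
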